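/- arXiv:1001.0085 — 6 statements merged into one kernel-verified Lean document; each statement's English description precedes it below -/
import Mathlib

section
/- For n×n positive definite complex matrices A, B and n×n positive semidefinite complex matrices C, D, the trace Tr[(A−B)(B⁻¹−A⁻¹) + (C−D)((B+D)⁻¹−(A+C)⁻¹)] is a real number and is greater than or equal to 0. -/
/-!
Put `X = A - B`, `Z = (A + C) - (B + D)`, `P = (B + D)⁻¹`, `Q = (A + C)⁻¹`.
Then `C - D = Z - X`, `B⁻¹ - A⁻¹ = B⁻¹ X A⁻¹` and `P - Q = P Z Q`, so the trace equals
`Tr[X B⁻¹ X A⁻¹] + Tr[Z P Z Q] - Tr[X P Z Q]`.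
Since `(P, Q) ↦ Tr[X P X Q]` is monotone on positive semidefinite matrices and inversion is
antitone, `Tr[X B⁻¹ X A⁻¹] ≥ Tr[X P X Q]`; and `2 Re Tr[X P Z Q] ≤ Tr[X P X Q] + Tr[Z P Z Q]`
because `Tr[(X - Z) P (X - Z) Q] ≥ 0`. The trace is real, being a sum of traces of products
of two Hermitian matrices.
-/

open Matrix ComplexOrder

namespace Matrix

open scoped MatrixOrder

variable {𝕜 ι : Type*} [RCLike 𝕜] [Fintype ι]

theorem PosSemidef.trace_mul_nonneg {P Q : Matrix ι ι 𝕜} (hP : P.PosSemidef)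
    (hQ : Q.PosSemidef) : 0 ≤ (P * Q).trace := by
  classical
  obtain ⟨R, rfl⟩ := CStarAlgebra.nonneg_iff_eq_star_mul_self.mp hQ.nonneg
  rw [star_eq_conjTranspose, ← Matrix.mul_assoc, trace_mul_cycle]
  exact (hP.mul_mul_conjTranspose_same R).trace_nonneg

theorem IsHermitian.trace_mul_mul_mul_nonneg {H P Q : Matrix ι ι 𝕜} (hH : H.IsHermitian)
    (hP : P.PosSemidef) (hQ : Q.PosSemidef) : 0 ≤ (H * P * H * Q).trace := by
  simpa only [hH.eq] using (hP.conjTranspose_mul_mul_same H).trace_mul_nonneg hQ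

theorem IsHermitian.trace_mul_mul_mul_le {H P P' Q Q' : Matrix ι ι 𝕜} (hH : H.IsHermitian)
    (hP : 0 ≤ P) (hPP' : P ≤ P') (hQ : 0 ≤ Q) (hQQ' : Q ≤ Q') :
    (H * P * H * Q).trace ≤ (H * P' * H * Q').trace := by
  have h₁ := hH.trace_mul_mul_mul_nonneg (le_iff.mp hPP') (hQ.trans hQQ').posSemidef
  have h₂ := hH.trace_mul_mul_mul_nonneg hP.posSemidef (le_iff.mp hQQ')
  have hsplit : (H * P' * H * Q').trace - (H * P * H * Q).trace
      = (H * (P' - P) * H * Q').trace + (H * P * H * (Q' - Q)).trace := by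
    rw [← trace_add, ← trace_sub]
    congr 1
    noncomm_ring
  rw [← sub_nonneg, hsplit]
  exact add_nonneg h₁ h₂

theorem IsHermitian.trace_mul_mul_mul_add_swap_le {X Z P Q : Matrix ι ι 𝕜}
    (hX : X.IsHermitian) (hZ : Z.IsHermitian) (hP : P.PosSemidef) (hQ : Q.PosSemidef) :
    (X * P * Z * Q).trace + (Z * P * X * Q).trace
      ≤ (X * P * X * Q).trace + (Z * P * Z * Q).trace := by
  have hexpand : ((X - Z) * P * (X - Z) * Q).trace
      = (X * P * X * Q).trace + (Z * P * Z * Q).trace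
        - ((X * P * Z * Q).trace + (Z * P * X * Q).trace) := by
    rw [← trace_add, ← trace_add, ← trace_sub]
    congr 1
    noncomm_ring
  rw [← sub_nonneg, ← hexpand]
  exact (hX.sub hZ).trace_mul_mul_mul_nonneg hP hQ

theorem IsHermitian.star_trace_mul_mul_mul {X Y Z W : Matrix ι ι 𝕜} (hX : X.IsHermitian)
    (hY : Y.IsHermitian) (hZ : Z.IsHermitian) (hW : W.IsHermitian) :
    star (X * Y * Z * W).trace = (Z * Y * X * W).trace := by
  rw [← trace_conjTranspose]
  simp only [conjTranspose_mul, hX.eq, hY.eq, hZ.eq, hW.eq, ← Matrix.mul_assoc]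
  rw [Matrix.mul_assoc (W * Z), Matrix.mul_assoc W, trace_mul_comm, ← Matrix.mul_assoc]

theorem IsHermitian.im_trace_mul {X Y : Matrix ι ι 𝕜} (hX : X.IsHermitian)
    (hY : Y.IsHermitian) : RCLike.im (X * Y).trace = 0 := by
  rw [← RCLike.conj_eq_iff_im, ← RCLike.star_def, ← trace_conjTranspose, conjTranspose_mul,
    hX.eq, hY.eq, trace_mul_comm]

open scoped Matrix.Norms.L2Operator in
theorem PosDef.inv_add_le_inv [DecidableEq ι] {M E : Matrix ι ι ℂ} (hM : M.PosDef)
    (hE : E.PosSemidef) : (M + E)⁻¹ ≤ M⁻¹ := by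
  rw [nonsing_inv_eq_ringInverse, nonsing_inv_eq_ringInverse]
  exact CStarAlgebra.ringInverse_le_ringInverse (le_add_of_nonneg_right hE.nonneg)
    hM.isStrictlyPositive

end Matrix

theorem trace_BLD_nonneg {n : ℕ} (A B C D : Matrix (Fin n) (Fin n) ℂ)
    (hA : A.PosDef) (hB : B.PosDef) (hC : C.PosSemidef) (hD : D.PosSemidef) :
    (((A - B) * (B⁻¹ - A⁻¹) + (C - D) * ((B + D)⁻¹ - (A + C)⁻¹)).trace).im = 0 ∧
    0 ≤ (((A - B) * (B⁻¹ - A⁻¹) + (C - D) * ((B + D)⁻¹ - (A + C)⁻¹)).trace).re := by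
  have hAC : (A + C).PosDef := hA.add_posSemidef hC
  have hBD : (B + D).PosDef := hB.add_posSemidef hD
  refine ⟨?_, ?_⟩
  · rw [trace_add, Complex.add_im, ← RCLike.im_to_complex, ← RCLike.im_to_complex,
      (hA.1.sub hB.1).im_trace_mul (hB.inv.1.sub hA.inv.1),
      (hC.1.sub hD.1).im_trace_mul (hBD.inv.1.sub hAC.inv.1), add_zero]
  set X := A - B
  set Z := (A + C) - (B + D)
  set P := (B + D)⁻¹
  set Q := (A + C)⁻¹
  have hX : X.IsHermitian := hA.1.sub hB.1
  have hZ : Z.IsHermitian := hAC.1.sub hBD.1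
  have hP : P.PosSemidef := hBD.inv.posSemidef
  have hQ : Q.PosSemidef := hAC.inv.posSemidef
  have htrace : (X * (B⁻¹ - A⁻¹) + (C - D) * (P - Q)).trace
      = (X * B⁻¹ * X * A⁻¹).trace + (Z * P * Z * Q).trace - (X * P * Z * Q).trace := by
    have hBA : B⁻¹ - A⁻¹ = B⁻¹ * X * A⁻¹ := inv_sub_inv (iff_of_true hB.isUnit hA.isUnit)
    have hPQ : P - Q = P * Z * Q := inv_sub_inv (iff_of_true hBD.isUnit hAC.isUnit)
    have hCD : C - D = Z - X := by simp only [X, Z]; abel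
    rw [hBA, hPQ, hCD, ← trace_add, ← trace_sub]
    congr 1
    noncomm_ring
  have hmono : (X * P * X * Q).trace ≤ (X * B⁻¹ * X * A⁻¹).trace :=
    hX.trace_mul_mul_mul_le hP.nonneg (hB.inv_add_le_inv hD) hQ.nonneg (hA.inv_add_le_inv hC)
  have hcross := hX.trace_mul_mul_mul_add_swap_le hZ hP hQ
  have hsymm : (Z * P * X * Q).trace.re = (X * P * Z * Q).trace.re := by
    rw [← hX.star_trace_mul_mul_mul hP.1 hZ hQ.1, Complex.star_def, Complex.conj_re]
  have hXX := hX.trace_mul_mul_mul_nonneg hP hQ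
  have hZZ := hZ.trace_mul_mul_mul_nonneg hP hQ
  rw [Complex.le_def] at hmono hcross hXX hZZ
  simp only [htrace, Complex.add_re, Complex.sub_re, Complex.zero_re] at hmono hcross hXX hZZ ⊢
  linarith [hmono.1, hcross.1, hXX.1, hZZ.1]
end

section
/- For n×n Hermitian complex matrices X₁, X₂ and n×n positive semidefinite complex matrices S₁, S₂, one has Tr[X₁S₁X₁S₂] + Tr[X₂S₁X₂S₂] ≥ 2·|Tr[X₁S₁X₂S₂]|, where the two traces on the left-hand side are nonnegative real numbers and |·| denotes the complex modulus. -/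
open Matrix ComplexOrder

/-! Factor S₁ = A⋆A and S₂ = B⋆B. For Hermitian X, Tr[X S₁ Y S₂] is then the Frobenius inner product
of A X B⋆ and A Y B⋆, so the inequality is Cauchy–Schwarz followed by 2ab ≤ a² + b². -/

theorem two_mul_norm_inner_le_norm_sq_add_norm_sq {𝕜 E : Type*} [RCLike 𝕜]
    [SeminormedAddCommGroup E] [InnerProductSpace 𝕜 E] (u v : E) :
    2 * ‖inner 𝕜 u v‖ ≤ ‖u‖ ^ 2 + ‖v‖ ^ 2 :=
  calc 2 * ‖inner 𝕜 u v‖ ≤ 2 * ‖u‖ * ‖v‖ := by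
        rw [mul_assoc]; gcongr; exact norm_inner_le_norm u v
    _ ≤ ‖u‖ ^ 2 + ‖v‖ ^ 2 := two_mul_le_add_sq _ _

namespace Matrix

variable {m n 𝕜 : Type*} [Fintype m] [Fintype n] [RCLike 𝕜]

theorem inner_toLp_vec (M N : Matrix m n 𝕜) :
    inner 𝕜 (WithLp.toLp 2 M.vec) (WithLp.toLp 2 N.vec) = (Mᴴ * N).trace := by
  rw [EuclideanSpace.inner_eq_star_dotProduct, dotProduct_comm, star_vec_dotProduct_vec]

theorem IsHermitian.trace_mul_conjTranspose_mul_mul_mul_conjTranspose_mul {R : Type*}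
    [CommRing R] [StarRing R] {X : Matrix n n R} (hX : X.IsHermitian) (A B Y : Matrix n n R) :
    (X * (Aᴴ * A) * Y * (Bᴴ * B)).trace = ((A * X * Bᴴ)ᴴ * (A * Y * Bᴴ)).trace := by
  rw [conjTranspose_mul, conjTranspose_mul, conjTranspose_conjTranspose, hX.eq]
  simp only [Matrix.mul_assoc]
  rw [trace_mul_comm B]
  simp only [Matrix.mul_assoc]

open scoped MatrixOrder in
theorem PosSemidef.exists_trace_mul_mul_mul_mul_eq_inner [DecidableEq n] {S₁ S₂ : Matrix n n 𝕜}
    (hS₁ : S₁.PosSemidef) (hS₂ : S₂.PosSemidef) :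
    ∃ f : Matrix n n 𝕜 → EuclideanSpace 𝕜 (n × n), ∀ X Y, X.IsHermitian →
      (X * S₁ * Y * S₂).trace = inner 𝕜 (f X) (f Y) := by
  obtain ⟨A, rfl⟩ := CStarAlgebra.nonneg_iff_eq_star_mul_self.mp hS₁.nonneg
  obtain ⟨B, rfl⟩ := CStarAlgebra.nonneg_iff_eq_star_mul_self.mp hS₂.nonneg
  refine ⟨fun X ↦ WithLp.toLp 2 (A * X * Bᴴ).vec, fun X Y hX ↦ ?_⟩
  rw [inner_toLp_vec, ← hX.trace_mul_conjTranspose_mul_mul_mul_conjTranspose_mul]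
  rfl

end Matrix

theorem trace_hermitian_pair_ineq {n : ℕ} (X₁ X₂ S₁ S₂ : Matrix (Fin n) (Fin n) ℂ)
    (hX₁ : X₁.IsHermitian) (hX₂ : X₂.IsHermitian)
    (hS₁ : S₁.PosSemidef) (hS₂ : S₂.PosSemidef) :
    ((X₁ * S₁ * X₁ * S₂).trace).im = 0 ∧ 0 ≤ ((X₁ * S₁ * X₁ * S₂).trace).re ∧
    ((X₂ * S₁ * X₂ * S₂).trace).im = 0 ∧ 0 ≤ ((X₂ * S₁ * X₂ * S₂).trace).re ∧
    ((X₁ * S₁ * X₁ * S₂).trace).re + ((X₂ * S₁ * X₂ * S₂).trace).re ≥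
      2 * ‖(X₁ * S₁ * X₂ * S₂).trace‖ := by
  obtain ⟨f, hf⟩ := hS₁.exists_trace_mul_mul_mul_mul_eq_inner hS₂
  have h₁ : (X₁ * S₁ * X₁ * S₂).trace = ((‖f X₁‖ ^ 2 : ℝ) : ℂ) := by
    rw [hf X₁ X₁ hX₁, Complex.ofReal_pow]; exact inner_self_eq_norm_sq_to_K _
  have h₂ : (X₂ * S₁ * X₂ * S₂).trace = ((‖f X₂‖ ^ 2 : ℝ) : ℂ) := by
    rw [hf X₂ X₂ hX₂, Complex.ofReal_pow]; exact inner_self_eq_norm_sq_to_K _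
  simp only [h₁, h₂, hf X₁ X₂ hX₁, Complex.ofReal_im, Complex.ofReal_re]
  exact ⟨trivial, by positivity, trivial, by positivity,
    two_mul_norm_inner_le_norm_sq_add_norm_sq (f X₁) (f X₂)⟩
end

section
/- For n×n positive definite complex matrices A, B and n×n positive semidefinite complex matrices C, D, the trace Tr[(C−D)(B+D)⁻¹(A−B)(A+C)⁻¹] is a real number; indeed it equals Tr[(C−D)(B+D)⁻¹] − Tr[(C−D)(A+C)⁻¹] − Tr[(C−D)(B+D)⁻¹(C−D)(A+C)⁻¹], each summand of which is real. -/
open Matrix ComplexOrder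

theorem trace_product_is_real {n : ℕ} (A B C D : Matrix (Fin n) (Fin n) ℂ)
    (hA : A.PosDef) (hB : B.PosDef) (hC : C.PosSemidef) (hD : D.PosSemidef) :
    (((C - D) * (B + D)⁻¹ * (A - B) * (A + C)⁻¹).trace).im = 0 ∧
    ((C - D) * (B + D)⁻¹ * (A - B) * (A + C)⁻¹).trace =
      ((C - D) * (B + D)⁻¹).trace - ((C - D) * (A + C)⁻¹).trace -
        ((C - D) * (B + D)⁻¹ * (C - D) * (A + C)⁻¹).trace ∧
    (((C - D) * (B + D)⁻¹).trace).im = 0 ∧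
    (((C - D) * (A + C)⁻¹).trace).im = 0 ∧
    (((C - D) * (B + D)⁻¹ * (C - D) * (A + C)⁻¹).trace).im = 0 := by
  have hAC : (A + C).PosDef := hA.add_posSemidef hC
  have hBD : (B + D).PosDef := hB.add_posSemidef hD
  have hACd : IsUnit (A + C).det := hAC.det_pos.ne'.isUnit
  have hBDd : IsUnit (B + D).det := hBD.det_pos.ne'.isUnit
  have hE : (C - D)ᴴ = C - D := by
    rw [conjTranspose_sub, hC.isHermitian, hD.isHermitian]
  have hP : ((B + D)⁻¹)ᴴ = (B + D)⁻¹ := hBD.isHermitian.inv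
  have hQ : ((A + C)⁻¹)ᴴ = (A + C)⁻¹ := hAC.isHermitian.inv
  have key : (C - D) * (B + D)⁻¹ * (A - B) * (A + C)⁻¹ =
      (C - D) * (B + D)⁻¹ - (C - D) * (A + C)⁻¹ -
        (C - D) * (B + D)⁻¹ * (C - D) * (A + C)⁻¹ := by
    have hab : A - B = (A + C) - (B + D) - (C - D) := by abel
    rw [hab]
    simp only [mul_sub, sub_mul, mul_assoc, Matrix.mul_nonsing_inv _ hACd,
      Matrix.nonsing_inv_mul_cancel_left _ _ hBDd, mul_one]
  have real1 : (((C - D) * (B + D)⁻¹).trace).im = 0 := by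
    have h : star (((C - D) * (B + D)⁻¹).trace) = ((C - D) * (B + D)⁻¹).trace := by
      rw [← Matrix.trace_conjTranspose, conjTranspose_mul, hE, hP, trace_mul_comm]
    exact Complex.conj_eq_iff_im.mp h
  have real2 : (((C - D) * (A + C)⁻¹).trace).im = 0 := by
    have h : star (((C - D) * (A + C)⁻¹).trace) = ((C - D) * (A + C)⁻¹).trace := by
      rw [← Matrix.trace_conjTranspose, conjTranspose_mul, hE, hQ, trace_mul_comm]
    exact Complex.conj_eq_iff_im.mp h
  have real3 : (((C - D) * (B + D)⁻¹ * (C - D) * (A + C)⁻¹).trace).im = 0 := by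
    have h : star (((C - D) * (B + D)⁻¹ * (C - D) * (A + C)⁻¹).trace) =
        ((C - D) * (B + D)⁻¹ * (C - D) * (A + C)⁻¹).trace := by
      rw [← Matrix.trace_conjTranspose]
      simp only [conjTranspose_mul, hE, hP, hQ]
      rw [show (A + C)⁻¹ * ((C - D) * ((B + D)⁻¹ * (C - D))) =
          (A + C)⁻¹ * ((C - D) * (B + D)⁻¹ * (C - D)) by noncomm_ring,
        trace_mul_comm]
    exact Complex.conj_eq_iff_im.mp h
  refine ⟨?_, by rw [key]; simp, real1, real2, real3⟩
  rw [key]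
  simp [real1, real2, real3]
end

section
/- For n×n positive definite complex matrices A, B and n×n positive semidefinite complex matrices C, D, writing T = Tr[(C−D)(B+D)⁻¹(A−B)(A+C)⁻¹] (a real number), one has Tr[(A−B)(B⁻¹−A⁻¹) + (C−D)((B+D)⁻¹−(A+C)⁻¹)] ≥ 2·|T| + T. -/
/-!
Put `X = A - B`, `Y = C - D`, `P = (B + D)⁻¹`, `Q = (A + C)⁻¹`. The resolvent identities
`B⁻¹ - A⁻¹ = B⁻¹ X A⁻¹` and `P - Q = P (X + Y) Q` turn the left-hand side into
`Tr(X B⁻¹ X A⁻¹) + T + Tr(Y P Y Q)`, and show `T = Tr(Y (P - Q)) - Tr(Y P Y Q)` is real.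
Inversion is antitone, so `B⁻¹ ≥ P` and `A⁻¹ ≥ Q`, and the first term is at least
`Tr(X P X Q)`.
Finally `(U, V) ↦ Tr(U P V Q)` is a positive semidefinite form on Hermitian matrices, and
Cauchy–Schwarz for it gives `Tr(X P X Q) + Tr(Y P Y Q) ≥ 2 |T|`.
-/

open Matrix ComplexOrder

namespace Matrix

variable {m 𝕜 : Type*} [Fintype m] [RCLike 𝕜]

lemma IsHermitian.im_trace_mul_eq_zero {H K : Matrix m m 𝕜} (hH : H.IsHermitian)
    (hK : K.IsHermitian) : RCLike.im (H * K).trace = 0 := by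
  rw [← RCLike.conj_eq_iff_im, ← RCLike.star_def, ← trace_conjTranspose, conjTranspose_mul,
    hH.eq, hK.eq, trace_mul_comm]

open scoped MatrixOrder in
lemma PosSemidef.trace_mul_nonneg_s6 {S R : Matrix m m 𝕜} (hS : S.PosSemidef) (hR : R.PosSemidef) :
    0 ≤ (S * R).trace := by
  classical
  obtain ⟨s, hs, rfl⟩ : ∃ s : Matrix m m 𝕜, s.IsHermitian ∧ S = s * s :=
    ⟨CFC.sqrt S, (CFC.sqrt_nonneg S).posSemidef.isHermitian,
      (CFC.sqrt_mul_sqrt_self S hS.nonneg).symm⟩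
  have := hR.conjTranspose_mul_mul_same s
  rw [hs.eq] at this
  rw [mul_assoc, trace_mul_comm]
  exact this.trace_nonneg

lemma PosSemidef.trace_mul_mul_mul_nonneg {X S R : Matrix m m 𝕜} (hX : X.IsHermitian)
    (hS : S.PosSemidef) (hR : R.PosSemidef) : 0 ≤ (X * S * X * R).trace := by
  have := hS.conjTranspose_mul_mul_same X
  rw [hX.eq] at this
  exact this.trace_mul_nonneg_s6 hR

lemma trace_mul_mul_mul_mono {X S S' R R' : Matrix m m 𝕜} (hX : X.IsHermitian)
    (hS : S.PosSemidef) (hSS' : (S' - S).PosSemidef) (hR' : R'.PosSemidef)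
    (hRR' : (R' - R).PosSemidef) : (X * S * X * R).trace ≤ (X * S' * X * R').trace := by
  have hsplit :
      X * S' * X * R' = X * S * X * R + X * (S' - S) * X * R' + X * S * X * (R' - R) := by
    noncomm_ring
  rw [hsplit, trace_add, trace_add, add_assoc]
  exact le_add_of_nonneg_right (add_nonneg (hSS'.trace_mul_mul_mul_nonneg hX hR')
    (hS.trace_mul_mul_mul_nonneg hX hRR'))

lemma abs_re_trace_mul_mul_mul_le {X Y S R : Matrix m m 𝕜} (hX : X.IsHermitian)
    (hY : Y.IsHermitian) (hS : S.PosSemidef) (hR : R.PosSemidef) :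
    2 * |RCLike.re (Y * S * X * R).trace| ≤
      RCLike.re (X * S * X * R).trace + RCLike.re (Y * S * Y * R).trace := by
  have hconj : RCLike.re (X * S * Y * R).trace = RCLike.re (Y * S * X * R).trace := by
    rw [← RCLike.conj_re, ← RCLike.star_def, ← trace_conjTranspose]
    simp only [conjTranspose_mul, hX.eq, hY.eq, hS.isHermitian.eq, hR.isHermitian.eq]
    rw [trace_mul_comm]
    simp only [mul_assoc]
  have hplus := RCLike.nonneg_iff.mp (hS.trace_mul_mul_mul_nonneg (hX.add hY) hR) |>.1
  have hminus := RCLike.nonneg_iff.mp (hS.trace_mul_mul_mul_nonneg (hX.sub hY) hR) |>.1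
  have eplus : (X + Y) * S * (X + Y) * R
      = X * S * X * R + X * S * Y * R + Y * S * X * R + Y * S * Y * R := by noncomm_ring
  have eminus : (X - Y) * S * (X - Y) * R
      = X * S * X * R - X * S * Y * R - Y * S * X * R + Y * S * Y * R := by noncomm_ring
  rw [eplus, trace_add, trace_add, trace_add] at hplus
  rw [eminus, trace_add, trace_sub, trace_sub] at hminus
  simp only [map_add, map_sub, hconj] at hplus hminus
  rcases abs_cases (RCLike.re (Y * S * X * R).trace) with ⟨h, -⟩ | ⟨h, -⟩ <;>
    rw [h] <;> linarith

variable [DecidableEq m]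

lemma PosDef.posSemidef_inv_sub_inv {A B : Matrix m m 𝕜} (hA : A.PosDef)
    (hAB : (B - A).PosSemidef) : (A⁻¹ - B⁻¹).PosSemidef := by
  have hB : B.PosDef := by simpa using hA.add_posSemidef hAB
  have hAdet := (isUnit_iff_isUnit_det A).mp hA.isUnit
  have hBdet := (isUnit_iff_isUnit_det B).mp hB.isUnit
  have hmid : (B - A) + (B - A) * A⁻¹ * (B - A) = B * A⁻¹ * (B - A) := by
    simp only [mul_sub, sub_mul, mul_nonsing_inv _ hAdet, nonsing_inv_mul_cancel_right _ _ hAdet,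
      one_mul]
    abel
  have hcongr : A⁻¹ - B⁻¹ = B⁻¹ * ((B - A) + (B - A) * A⁻¹ * (B - A)) * B⁻¹ := by
    rw [hmid, inv_sub_inv (iff_of_true hA.isUnit hB.isUnit), mul_assoc B,
      nonsing_inv_mul_cancel_left _ _ hBdet]
  have hmid_psd := hAB.add (hA.inv.posSemidef.conjTranspose_mul_mul_same (B - A))
  rw [hAB.isHermitian.eq] at hmid_psd
  have hpsd := hmid_psd.conjTranspose_mul_mul_same B⁻¹
  rwa [hB.inv.isHermitian.eq, ← hcongr] at hpsd

end Matrix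

theorem trace_lower_bound_2T_plus_T {n : ℕ} (A B C D : Matrix (Fin n) (Fin n) ℂ)
    (hA : A.PosDef) (hB : B.PosDef) (hC : C.PosSemidef) (hD : D.PosSemidef) :
    (((C - D) * (B + D)⁻¹ * (A - B) * (A + C)⁻¹).trace).im = 0 ∧
    (((A - B) * (B⁻¹ - A⁻¹) + (C - D) * ((B + D)⁻¹ - (A + C)⁻¹)).trace).im = 0 ∧
    (((A - B) * (B⁻¹ - A⁻¹) + (C - D) * ((B + D)⁻¹ - (A + C)⁻¹)).trace).re ≥
      2 * |(((C - D) * (B + D)⁻¹ * (A - B) * (A + C)⁻¹).trace).re| +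
        (((C - D) * (B + D)⁻¹ * (A - B) * (A + C)⁻¹).trace).re := by
  have hBD : (B + D).PosDef := hB.add_posSemidef hD
  have hAC : (A + C).PosDef := hA.add_posSemidef hC
  set X := A - B
  set Y := C - D
  set P := (B + D)⁻¹
  set Q := (A + C)⁻¹
  have hX : X.IsHermitian := hA.isHermitian.sub hB.isHermitian
  have hY : Y.IsHermitian := hC.isHermitian.sub hD.isHermitian
  have hPQ : P - Q = P * (X + Y) * Q := by
    rw [inv_sub_inv (iff_of_true hBD.isUnit hAC.isUnit)]
    congr 2
    simp only [X, Y]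
    abel
  have hT : (Y * P * X * Q).trace = (Y * (P - Q)).trace - (Y * P * Y * Q).trace := by
    rw [eq_sub_iff_add_eq, ← trace_add, hPQ]
    noncomm_ring
  have hLHS : (X * (B⁻¹ - A⁻¹) + Y * (P - Q)).trace
      = (X * B⁻¹ * X * A⁻¹).trace + (Y * (P - Q)).trace := by
    rw [trace_add, inv_sub_inv (iff_of_true hB.isUnit hA.isUnit), ← mul_assoc, ← mul_assoc]
  have hXX : (X * P * X * Q).trace ≤ (X * B⁻¹ * X * A⁻¹).trace :=
    trace_mul_mul_mul_mono hX hBD.inv.posSemidef (hB.posSemidef_inv_sub_inv (by simpa using hD))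
      hA.inv.posSemidef (hA.posSemidef_inv_sub_inv (by simpa using hC))
  have hYY : 0 ≤ (Y * P * Y * Q).trace :=
    hBD.inv.posSemidef.trace_mul_mul_mul_nonneg hY hAC.inv.posSemidef
  have hCS := abs_re_trace_mul_mul_mul_le hX hY hBD.inv.posSemidef hAC.inv.posSemidef
  have hXim : (X * (B⁻¹ - A⁻¹)).trace.im = 0 :=
    hX.im_trace_mul_eq_zero (hB.inv.isHermitian.sub hA.inv.isHermitian)
  have hYim : (Y * (P - Q)).trace.im = 0 :=
    hY.im_trace_mul_eq_zero (hBD.inv.isHermitian.sub hAC.inv.isHermitian)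
  simp only [RCLike.re_to_complex] at hCS
  refine ⟨?_, ?_, ?_⟩
  · rw [hT, Complex.sub_im, hYim, ← (Complex.nonneg_iff.mp hYY).2, sub_zero]
  · rw [trace_add, Complex.add_im, hXim, hYim, add_zero]
  · have hTre := congrArg Complex.re hT
    rw [Complex.sub_re] at hTre
    rw [hLHS, Complex.add_re]
    linarith [(Complex.le_def.mp hXX).1, (Complex.nonneg_iff.mp hYY).1]
end

section
/- For n×n Hermitian complex matrices X₁, X₂, n×n positive semidefinite complex matrices S₁, S₂, and any positive real numbers a and b, one has a·Tr[X₁S₁X₁S₂] + b·Tr[X₂S₁X₂S₂] ≥ 2√(ab)·|Tr[X₁S₁X₂S₂]|, where the two traces on the left-hand side are nonnegative real numbers and |·| denotes the complex modulus. -/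
/-!
Write `S₁ = Bᴴ B`. For Hermitian `X`, cyclicity of the trace gives
`Tr[X S₁ Y S₂] = Tr[(B Y) S₂ (B X)ᴴ]`, and `(x, y) ↦ Tr[y S₂ xᴴ]` is the semi-inner product on
matrices induced by `S₂`. The two diagonal traces are therefore squared seminorms, the mixed
trace is bounded by Cauchy–Schwarz, and AM–GM finishes.
-/

open Matrix ComplexOrder

lemma two_mul_sqrt_mul_mul_le_of_sq_le_mul {a b p q c : ℝ} (ha : 0 ≤ a) (hb : 0 ≤ b)
    (hp : 0 ≤ p) (hq : 0 ≤ q) (hc : c ^ 2 ≤ p * q) :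
    2 * √(a * b) * c ≤ a * p + b * q := by
  have hc' : c ≤ √(p * q) := (le_abs_self c).trans (Real.abs_le_sqrt hc)
  calc 2 * √(a * b) * c ≤ 2 * √(a * b) * √(p * q) := by gcongr
    _ = 2 * √(a * p) * √(b * q) := by
      rw [mul_assoc, mul_assoc, ← Real.sqrt_mul (by positivity), ← Real.sqrt_mul (by positivity)]
      ring_nf
    _ ≤ a * p + b * q := by
      nlinarith [sq_nonneg (√(a * p) - √(b * q)), Real.sq_sqrt (mul_nonneg ha hp),
        Real.sq_sqrt (mul_nonneg hb hq)]

namespace Matrix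

variable {m 𝕜 : Type*} [Fintype m] [RCLike 𝕜]

open scoped MatrixOrder in
lemma PosSemidef.exists_eq_conjTranspose_mul_self [DecidableEq m] {S : Matrix m m 𝕜}
    (hS : S.PosSemidef) : ∃ B : Matrix m m 𝕜, S = Bᴴ * B :=
  CStarAlgebra.nonneg_iff_eq_star_mul_self.mp hS.nonneg

lemma IsHermitian.trace_mul_conjTranspose_mul_self_mul_mul {X : Matrix m m 𝕜}
    (hX : X.IsHermitian) (B Y M : Matrix m m 𝕜) :
    (X * (Bᴴ * B) * Y * M).trace = (B * Y * M * (B * X)ᴴ).trace := by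
  rw [conjTranspose_mul, hX.eq, trace_mul_comm (B * Y * M)]
  simp only [Matrix.mul_assoc]

lemma PosSemidef.norm_trace_mul_mul_conjTranspose_sq_le {M : Matrix m m 𝕜} (hM : M.PosSemidef)
    (x y : Matrix m m 𝕜) :
    ‖(y * M * xᴴ).trace‖ ^ 2 ≤
      RCLike.re (x * M * xᴴ).trace * RCLike.re (y * M * yᴴ).trace := by
  let := M.toMatrixSeminormedAddCommGroup hM
  let := M.toMatrixInnerProductSpace hM
  have h := inner_mul_inner_self_le (𝕜 := 𝕜) x y
  rwa [norm_inner_symm y x, ← sq] at h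

end Matrix

theorem trace_weighted_hermitian_ineq {n : ℕ} (X₁ X₂ S₁ S₂ : Matrix (Fin n) (Fin n) ℂ)
    (hX₁ : X₁.IsHermitian) (hX₂ : X₂.IsHermitian)
    (hS₁ : S₁.PosSemidef) (hS₂ : S₂.PosSemidef)
    (a b : ℝ) (ha : 0 < a) (hb : 0 < b) :
    ((X₁ * S₁ * X₁ * S₂).trace).im = 0 ∧ 0 ≤ ((X₁ * S₁ * X₁ * S₂).trace).re ∧
    ((X₂ * S₁ * X₂ * S₂).trace).im = 0 ∧ 0 ≤ ((X₂ * S₁ * X₂ * S₂).trace).re ∧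
    a * ((X₁ * S₁ * X₁ * S₂).trace).re + b * ((X₂ * S₁ * X₂ * S₂).trace).re ≥
      2 * Real.sqrt (a * b) * ‖(X₁ * S₁ * X₂ * S₂).trace‖ := by
  obtain ⟨B, rfl⟩ := hS₁.exists_eq_conjTranspose_mul_self
  simp only [hX₁.trace_mul_conjTranspose_mul_self_mul_mul,
    hX₂.trace_mul_conjTranspose_mul_self_mul_mul]
  have h₁ := Complex.nonneg_iff.mp (hS₂.mul_mul_conjTranspose_same (B * X₁)).trace_nonneg
  have h₂ := Complex.nonneg_iff.mp (hS₂.mul_mul_conjTranspose_same (B * X₂)).trace_nonneg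
  refine ⟨h₁.2.symm, h₁.1, h₂.2.symm, h₂.1, ?_⟩
  exact two_mul_sqrt_mul_mul_le_of_sq_le_mul ha.le hb.le h₁.1 h₂.1
    (hS₂.norm_trace_mul_mul_conjTranspose_sq_le (B * X₁) (B * X₂))
end

section
/- For n×n positive definite complex matrices A, B, n×n positive semidefinite complex matrices C, D, and any positive real number r, the trace Tr[(A−B)(B⁻¹−A⁻¹) + 4(C−D)((rB+D)⁻¹−(rA+C)⁻¹)] is a real number and is greater than or equal to 0. -/
/-!
Put `E = A - B`, `F = C - D`, `X = rA + C`, `Y = rB + D`, so that `X - Y = rE + F`. The resolvent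
identity `Y⁻¹ - X⁻¹ = Y⁻¹ (X - Y) X⁻¹ = X⁻¹ (X - Y) Y⁻¹` and cyclicity of the trace turn the
trace into
  `Tr[E B⁻¹ E A⁻¹] - Tr[(rE) Y⁻¹ (rE) X⁻¹] + Tr[G Y⁻¹ G X⁻¹]`,  with `G = rE + 2F`.
The last term is the trace of a product of two positive semidefinite matrices, hence `≥ 0`. The
first two compare because inversion is operator antitone, which gives `r Y⁻¹ ≤ B⁻¹` and
`r X⁻¹ ≤ A⁻¹`, and `(P, S) ↦ Tr[E P E S]` is monotone on positive semidefinite pairs.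
-/

open Matrix ComplexOrder
open scoped MatrixOrder

namespace Matrix

section RCLike

variable {n 𝕜 : Type*} [Fintype n] [DecidableEq n] [RCLike 𝕜]

lemma PosSemidef.trace_mul_nonneg_s11 {P S : Matrix n n 𝕜} (hP : P.PosSemidef)
    (hS : S.PosSemidef) : 0 ≤ (P * S).trace := by
  set R := CFC.sqrt P
  have hR : Rᴴ = R := (CFC.sqrt_nonneg P).posSemidef.1.eq
  have hRR : R * R = P := CFC.sqrt_mul_sqrt_self P hP.nonneg
  calc (0 : 𝕜) ≤ (Rᴴ * S * R).trace := (hS.conjTranspose_mul_mul_same R).trace_nonneg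
    _ = (P * S).trace := by rw [hR, trace_mul_comm, ← Matrix.mul_assoc, hRR]

lemma IsHermitian.trace_mul_mul_mul_nonneg_s11 {E P S : Matrix n n 𝕜} (hE : E.IsHermitian)
    (hP : P.PosSemidef) (hS : S.PosSemidef) : 0 ≤ (E * P * E * S).trace := by
  simpa only [hE.eq] using (hP.conjTranspose_mul_mul_same E).trace_mul_nonneg_s11 hS

lemma IsHermitian.trace_mul_mul_mul_le_s11 {E P P' S S' : Matrix n n 𝕜} (hE : E.IsHermitian)
    (hP : 0 ≤ P) (hPP' : P ≤ P') (hS : 0 ≤ S) (hSS' : S ≤ S') :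
    (E * P * E * S).trace ≤ (E * P' * E * S').trace := by
  have hsplit : (E * P' * E * S').trace - (E * P * E * S).trace
      = (E * (P' - P) * E * S').trace + (E * P * E * (S' - S)).trace := by
    simp only [Matrix.mul_sub, Matrix.sub_mul, trace_sub]
    abel
  rw [← sub_nonneg, hsplit]
  exact add_nonneg
    (hE.trace_mul_mul_mul_nonneg_s11 (le_iff.1 hPP') (hS.trans hSS').posSemidef)
    (hE.trace_mul_mul_mul_nonneg_s11 hP.posSemidef (le_iff.1 hSS'))

end RCLike

variable {n : Type*} [Fintype n] [DecidableEq n]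

theorem four_mul_trace_mul_inv_sub_inv {R : Type*} [CommRing R] {X Y U F : Matrix n n R}
    (hX : IsUnit X) (hY : IsUnit Y) (h : X - Y = U + F) :
    4 * (F * (Y⁻¹ - X⁻¹)).trace =
      ((U + 2 • F) * Y⁻¹ * (U + 2 • F) * X⁻¹).trace - (U * Y⁻¹ * U * X⁻¹).trace := by
  have hYX : Y⁻¹ * (X - Y) * X⁻¹ = Y⁻¹ - X⁻¹ := (inv_sub_inv ⟨fun _ ↦ hX, fun _ ↦ hY⟩).symm
  have hXY : X⁻¹ * (X - Y) * Y⁻¹ = Y⁻¹ - X⁻¹ := by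
    rw [← neg_sub Y X, Matrix.mul_neg, Matrix.neg_mul, ← inv_sub_inv ⟨fun _ ↦ hY, fun _ ↦ hX⟩,
      neg_sub]
  generalize X - Y = Z at h hYX hXY
  generalize Y⁻¹ - X⁻¹ = M at hYX hXY ⊢
  obtain rfl : F = Z - U := by rw [h]; abel
  have hZZ : (Z * Y⁻¹ * Z * X⁻¹).trace = (Z * M).trace := by
    rw [← hYX]; simp only [Matrix.mul_assoc]
  have hZU : (Z * Y⁻¹ * U * X⁻¹).trace = (U * M).trace := by
    rw [← hXY, Matrix.mul_assoc, trace_mul_comm]; simp only [Matrix.mul_assoc]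
  have hUZ : (U * Y⁻¹ * Z * X⁻¹).trace = (U * M).trace := by
    rw [← hYX]; simp only [Matrix.mul_assoc]
  rw [show U + 2 • (Z - U) = 2 • Z - U by abel]
  simp only [Matrix.sub_mul, Matrix.mul_sub, Matrix.smul_mul, Matrix.mul_smul, trace_sub,
    trace_smul, hZZ, hZU, hUZ]
  simp only [nsmul_eq_mul, Nat.cast_ofNat]
  ring

section Complex

open scoped Matrix.Norms.L2Operator

lemma PosDef.inv_le_inv {P Q : Matrix n n ℂ} (hP : P.PosDef) (hPQ : P ≤ Q) : Q⁻¹ ≤ P⁻¹ := by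
  have hQ : Q.PosDef := by simpa using hP.add_posSemidef (le_iff.1 hPQ)
  lift P to (Matrix n n ℂ)ˣ using hP.isUnit
  lift Q to (Matrix n n ℂ)ˣ using hQ.isUnit
  simpa only [coe_units_inv] using CStarAlgebra.inv_le_inv hP.posSemidef.nonneg hPQ

lemma PosDef.smul_inv_smul_add_le_inv {B D : Matrix n n ℂ} (hB : B.PosDef)
    (hD : D.PosSemidef) {c : ℂ} (hc : 0 < c) : c • (c • B + D)⁻¹ ≤ B⁻¹ := by
  have hcD : (c⁻¹ • D).PosSemidef := hD.smul (inv_pos.2 hc).le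
  have hfactor : c • B + D = c • (B + c⁻¹ • D) := by
    rw [smul_add, smul_smul, mul_inv_cancel₀ hc.ne', one_smul]
  have hinv : (c • (B + c⁻¹ • D))⁻¹ = c⁻¹ • (B + c⁻¹ • D)⁻¹ :=
    inv_smul' _ (Units.mk0 c hc.ne') ((isUnit_iff_isUnit_det _).1 (hB.add_posSemidef hcD).isUnit)
  rw [hfactor, hinv, smul_smul, mul_inv_cancel₀ hc.ne', one_smul]
  exact hB.inv_le_inv (le_add_of_nonneg_right hcD.nonneg)

lemma IsHermitian.trace_smul_mul_inv_smul_add_le {E A B C D : Matrix n n ℂ} (hE : E.IsHermitian)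
    (hA : A.PosDef) (hB : B.PosDef) (hC : C.PosSemidef) (hD : D.PosSemidef) {c : ℂ}
    (hc : 0 < c) :
    (c • E * (c • B + D)⁻¹ * (c • E) * (c • A + C)⁻¹).trace ≤ (E * B⁻¹ * E * A⁻¹).trace := by
  have hscale : c • E * (c • B + D)⁻¹ * (c • E) * (c • A + C)⁻¹
      = E * (c • (c • B + D)⁻¹) * E * (c • (c • A + C)⁻¹) := by
    simp only [Matrix.smul_mul, Matrix.mul_smul]
  rw [hscale]
  exact hE.trace_mul_mul_mul_le_s11
    (((hB.smul hc).add_posSemidef hD).inv.posSemidef.smul hc.le).nonneg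
    (hB.smul_inv_smul_add_le_inv hD hc)
    (((hA.smul hc).add_posSemidef hC).inv.posSemidef.smul hc.le).nonneg
    (hA.smul_inv_smul_add_le_inv hC hc)

end Complex

end Matrix

theorem trace_BLD_improved_scaled {n : ℕ} (A B C D : Matrix (Fin n) (Fin n) ℂ)
    (hA : A.PosDef) (hB : B.PosDef) (hC : C.PosSemidef) (hD : D.PosSemidef)
    (r : ℝ) (hr : 0 < r) :
    (((A - B) * (B⁻¹ - A⁻¹) +
        (4 : ℂ) • ((C - D) * (((r : ℂ) • B + D)⁻¹ - ((r : ℂ) • A + C)⁻¹))).trace).im = 0 ∧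
    0 ≤ (((A - B) * (B⁻¹ - A⁻¹) +
        (4 : ℂ) • ((C - D) * (((r : ℂ) • B + D)⁻¹ - ((r : ℂ) • A + C)⁻¹))).trace).re := by
  have hrc : (0 : ℂ) < r := Complex.zero_lt_real.2 hr
  have hE : (A - B).IsHermitian := hA.isHermitian.sub hB.isHermitian
  have hF : (C - D).IsHermitian := hC.isHermitian.sub hD.isHermitian
  have hG : ((r : ℂ) • (A - B) + 2 • (C - D)).IsHermitian :=
    (hE.smul (IsSelfAdjoint.of_nonneg hrc.le)).add (two_nsmul (C - D) ▸ hF.add hF)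
  have hX : ((r : ℂ) • A + C).PosDef := (hA.smul hrc).add_posSemidef hC
  have hY : ((r : ℂ) • B + D).PosDef := (hB.smul hrc).add_posSemidef hD
  have hAB : ((A - B) * (B⁻¹ - A⁻¹)).trace = ((A - B) * B⁻¹ * (A - B) * A⁻¹).trace := by
    rw [inv_sub_inv ⟨fun _ ↦ hA.isUnit, fun _ ↦ hB.isUnit⟩]
    simp only [Matrix.mul_assoc]
  have hCD := four_mul_trace_mul_inv_sub_inv hX.isUnit hY.isUnit
    (show (r : ℂ) • A + C - ((r : ℂ) • B + D) = (r : ℂ) • (A - B) + (C - D) by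
      rw [smul_sub]; abel)
  have hsum : 0 ≤ ((A - B) * (B⁻¹ - A⁻¹) +
      (4 : ℂ) • ((C - D) * (((r : ℂ) • B + D)⁻¹ - ((r : ℂ) • A + C)⁻¹))).trace := by
    rw [trace_add, trace_smul, smul_eq_mul, hAB, hCD]
    exact (add_nonneg (sub_nonneg.2 (hE.trace_smul_mul_inv_smul_add_le hA hB hC hD hrc))
      (hG.trace_mul_mul_mul_nonneg_s11 hY.inv.posSemidef hX.inv.posSemidef)).trans_eq (by ring)
  exact ⟨(Complex.nonneg_iff.1 hsum).2.symm, (Complex.nonneg_iff.1 hsum).1⟩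
end
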